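/- arXiv:2605.08358 — 2 statements merged into one kernel-verified Lean document; each statement's English description precedes it below -/
import Mathlib

section
/- Let H be an N×N Hadamard matrix with rows h_1,…,h_N, and for t ∈ {1,…,N} let Q_t be the t×N matrix whose i-th row is q_i = 2^{(i−1)/2}·h_i. Then for every t ∈ {1,…,N}: 2^{(t−1)/2} ≤ γ2(Q_t) ≤ √(2^t − 1). -/
/-!
The largest entry of `Q_t` is `2^{(t-1)/2}` in absolute value, and by Cauchy–Schwarz every entry
of `L * R` is bounded by `‖L‖_{2→∞} ‖R‖_{1→2}`, which gives the lower bound. The trivial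
factorization `Q_t = I · Q_t` gives the upper bound: every column of `Q_t` has squared norm
`∑_{i<t} 2^i = 2^t - 1`.
-/

open Matrix

/-- `‖M‖_{2→∞}`: the maximum ℓ2 norm of a row of `M`. -/
noncomputable def rowNorm2inf {α β : Type*} [Fintype α] [Fintype β] (M : Matrix α β ℝ) : ℝ :=
  ⨆ i, Real.sqrt (∑ j, (M i j) ^ 2)

/-- `‖M‖_{1→2}`: the maximum ℓ2 norm of a column of `M`. -/
noncomputable def colNorm12 {α β : Type*} [Fintype α] [Fintype β] (M : Matrix α β ℝ) : ℝ :=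
  ⨆ j, Real.sqrt (∑ i, (M i j) ^ 2)

/-- The γ₂ factorization norm. -/
noncomputable def gamma2 {α β : Type*} [Fintype α] [Fintype β] (A : Matrix α β ℝ) : ℝ :=
  sInf { c : ℝ | ∃ (k : ℕ) (L : Matrix α (Fin k) ℝ) (R : Matrix (Fin k) β ℝ),
    L * R = A ∧ c = rowNorm2inf L * colNorm12 R }

section FactorizationNorm

variable {α β : Type*} [Fintype α] [Fintype β]

lemma rowNorm2inf_nonneg (M : Matrix α β ℝ) : 0 ≤ rowNorm2inf M :=
  Real.iSup_nonneg fun _ => Real.sqrt_nonneg _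

lemma colNorm12_nonneg (M : Matrix α β ℝ) : 0 ≤ colNorm12 M :=
  Real.iSup_nonneg fun _ => Real.sqrt_nonneg _

lemma sqrt_sum_sq_row_le_rowNorm2inf (M : Matrix α β ℝ) (i : α) :
    Real.sqrt (∑ j, M i j ^ 2) ≤ rowNorm2inf M :=
  le_ciSup (f := fun i => Real.sqrt (∑ j, M i j ^ 2)) (Set.finite_range _).bddAbove i

lemma sqrt_sum_sq_col_le_colNorm12 (M : Matrix α β ℝ) (j : β) :
    Real.sqrt (∑ i, M i j ^ 2) ≤ colNorm12 M :=
  le_ciSup (f := fun j => Real.sqrt (∑ i, M i j ^ 2)) (Set.finite_range _).bddAbove j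

lemma colNorm12_eq_sqrt_of_forall_sum_sq_eq [Nonempty β] {M : Matrix α β ℝ} {c : ℝ}
    (h : ∀ j, ∑ i, M i j ^ 2 = c) : colNorm12 M = Real.sqrt c := by
  simp only [colNorm12, h, ciSup_const]

lemma abs_mul_apply_le_rowNorm2inf_mul_colNorm12 {k : Type*} [Fintype k]
    (L : Matrix α k ℝ) (R : Matrix k β ℝ) (i : α) (j : β) :
    |(L * R) i j| ≤ rowNorm2inf L * colNorm12 R :=
  calc |(L * R) i j|
      ≤ Real.sqrt (∑ x, L i x ^ 2) * Real.sqrt (∑ x, R x j ^ 2) := by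
        rw [mul_apply, ← Real.sqrt_sq_eq_abs,
          ← Real.sqrt_mul (Finset.sum_nonneg fun _ _ => sq_nonneg _)]
        exact Real.sqrt_le_sqrt (Finset.sum_mul_sq_le_sq_mul_sq _ _ _)
    _ ≤ rowNorm2inf L * colNorm12 R :=
        mul_le_mul (sqrt_sum_sq_row_le_rowNorm2inf L i) (sqrt_sum_sq_col_le_colNorm12 R j)
          (Real.sqrt_nonneg _) (rowNorm2inf_nonneg L)

lemma exists_mul_eq_rowNorm2inf_le_one_colNorm12_eq (A : Matrix α β ℝ) :
    ∃ (k : ℕ) (L : Matrix α (Fin k) ℝ) (R : Matrix (Fin k) β ℝ),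
      L * R = A ∧ rowNorm2inf L ≤ 1 ∧ colNorm12 R = colNorm12 A := by
  classical
  -- `A = 1 * A`, with the inner index reindexed to `Fin (card α)` as `gamma2` requires.
  let e := Fintype.equivFin α
  refine ⟨Fintype.card α, (1 : Matrix α α ℝ).submatrix id e.symm, A.submatrix e.symm id,
    ?_, ?_, ?_⟩
  · rw [← submatrix_mul _ _ _ _ _ e.symm.bijective, Matrix.one_mul, submatrix_id_id]
  · refine Real.iSup_le (fun i => ?_) zero_le_one
    rw [show ∑ k, (1 : Matrix α α ℝ).submatrix id e.symm i k ^ 2 = ∑ a, (1 : Matrix α α ℝ) i a ^ 2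
      from Equiv.sum_comp e.symm (fun a => (1 : Matrix α α ℝ) i a ^ 2)]
    simp [one_apply]
  · simp only [colNorm12, submatrix_apply, id]
    congr! 2 with j
    rw [Equiv.sum_comp e.symm (fun a => A a j ^ 2)]

lemma gamma2_le_of_mul_eq {A : Matrix α β ℝ} {k : ℕ} (L : Matrix α (Fin k) ℝ)
    (R : Matrix (Fin k) β ℝ) (h : L * R = A) : gamma2 A ≤ rowNorm2inf L * colNorm12 R := by
  refine csInf_le ⟨0, ?_⟩ ⟨k, L, R, h, rfl⟩
  rintro c ⟨k, L, R, -, rfl⟩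
  exact mul_nonneg (rowNorm2inf_nonneg L) (colNorm12_nonneg R)

lemma gamma2_le_colNorm12 (A : Matrix α β ℝ) : gamma2 A ≤ colNorm12 A := by
  obtain ⟨k, L, R, hLR, hL, hR⟩ := exists_mul_eq_rowNorm2inf_le_one_colNorm12_eq A
  calc gamma2 A ≤ rowNorm2inf L * colNorm12 R := gamma2_le_of_mul_eq L R hLR
    _ ≤ colNorm12 A := by
      rw [hR]
      exact mul_le_of_le_one_left (colNorm12_nonneg A) hL

lemma abs_apply_le_gamma2 (A : Matrix α β ℝ) (i : α) (j : β) : |A i j| ≤ gamma2 A := by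
  obtain ⟨k, L, R, hLR, -⟩ := exists_mul_eq_rowNorm2inf_le_one_colNorm12_eq A
  refine le_csInf ⟨_, k, L, R, hLR, rfl⟩ ?_
  rintro c ⟨k, L, R, rfl, rfl⟩
  exact abs_mul_apply_le_rowNorm2inf_mul_colNorm12 L R i j

end FactorizationNorm

lemma two_rpow_div_two_sq (r : ℕ) : ((2 : ℝ) ^ ((r : ℝ) / 2)) ^ 2 = 2 ^ r := by
  rw [Real.rpow_div_two_eq_sqrt _ zero_le_two, Real.rpow_natCast, ← pow_mul, mul_comm,
    pow_mul, Real.sq_sqrt zero_le_two]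

lemma abs_two_rpow_div_two_mul_of_sign {x : ℝ} (hx : x = 1 ∨ x = -1) (r : ℕ) :
    |(2 : ℝ) ^ ((r : ℝ) / 2) * x| = 2 ^ ((r : ℝ) / 2) := by
  rw [abs_mul, abs_of_pos (by positivity)]
  rcases hx with rfl | rfl <;> simp

theorem stmt11_general {N : ℕ} (H : Matrix (Fin N) (Fin N) ℝ)
    (hent : ∀ i j, H i j = 1 ∨ H i j = -1)
    (t : ℕ) (ht1 : 1 ≤ t) (ht : t ≤ N) :
    (2 : ℝ) ^ (((t : ℝ) - 1) / 2) ≤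
      gamma2 (Matrix.of fun (i : Fin t) (j : Fin N) =>
        (2 : ℝ) ^ ((i : ℝ) / 2) * H (Fin.castLE ht i) j) ∧
    gamma2 (Matrix.of fun (i : Fin t) (j : Fin N) =>
        (2 : ℝ) ^ ((i : ℝ) / 2) * H (Fin.castLE ht i) j) ≤
      Real.sqrt ((2 : ℝ) ^ t - 1) := by
  set Q : Matrix (Fin t) (Fin N) ℝ :=
    Matrix.of fun i j => (2 : ℝ) ^ ((i : ℝ) / 2) * H (Fin.castLE ht i) j
  have habsQ (i : Fin t) (j : Fin N) : |Q i j| = 2 ^ ((i : ℝ) / 2) :=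
    abs_two_rpow_div_two_mul_of_sign (hent _ j) i
  have : Nonempty (Fin N) := ⟨⟨0, by omega⟩⟩
  have hcol : colNorm12 Q = Real.sqrt (2 ^ t - 1) := by
    refine colNorm12_eq_sqrt_of_forall_sum_sq_eq fun j => ?_
    simp only [← sq_abs (Q _ j), habsQ, two_rpow_div_two_sq]
    rw [Fin.sum_univ_eq_sum_range (2 ^ ·) t, geom_sum_eq (by norm_num)]
    norm_num
  refine ⟨?_, hcol ▸ gamma2_le_colNorm12 Q⟩
  calc (2 : ℝ) ^ (((t : ℝ) - 1) / 2) = |Q ⟨t - 1, by omega⟩ ⟨0, by omega⟩| := by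
        rw [habsQ, Nat.cast_sub ht1, Nat.cast_one]
    _ ≤ gamma2 Q := abs_apply_le_gamma2 Q _ _

theorem stmt11 {N : ℕ} (H : Matrix (Fin N) (Fin N) ℝ)
    (hent : ∀ i j, H i j = 1 ∨ H i j = -1)
    (hHad : Hᵀ * H = (N : ℝ) • 1)
    (t : ℕ) (ht1 : 1 ≤ t) (ht : t ≤ N) :
    (2 : ℝ) ^ (((t : ℝ) - 1) / 2) ≤
      gamma2 (Matrix.of fun (i : Fin t) (j : Fin N) =>
        (2 : ℝ) ^ ((i : ℝ) / 2) * H (Fin.castLE ht i) j) ∧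
    gamma2 (Matrix.of fun (i : Fin t) (j : Fin N) =>
        (2 : ℝ) ^ ((i : ℝ) / 2) * H (Fin.castLE ht i) j) ≤
      Real.sqrt ((2 : ℝ) ^ t - 1) :=
  stmt11_general H hent t ht1 ht
end

section
/- Let α ∈ (0,1), let Q ∈ [0,1]^{m×N} be a matrix, let w be a positive integer with w ≤ N, and let x ∈ [0,1]^N be a vector with at most w nonzero coordinates and with ‖x‖_1 = w. Suppose hdisc*(Q, w) ≤ αw/4. Then there exists a Boolean vector y ∈ {0,1}^N such that, writing s := ‖y‖_1, we have 1 ≤ s ≤ 5·hdisc*(Q, w)/α and ‖Q·(x/w) − Q·(y/s)‖_∞ ≤ α. -/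
open Matrix

/-- The discrepancy of the columns of `Q` indexed by `S`: the minimum over ±1 colorings
of `S` of `‖Q_S x‖_∞`. -/
noncomputable def colDisc {m : ℕ} {β : Type*} [Fintype β] (Q : Matrix (Fin m) β ℝ)
    (S : Finset β) : ℝ :=
  sInf { v : ℝ | ∃ x : β → ℝ, (∀ j ∈ S, x j = 1 ∨ x j = -1) ∧
    v = ⨆ i, |∑ j ∈ S, Q i j * x j| }

/-- The restricted hereditary discrepancy `hdisc(Q, w)`. -/
noncomputable def hdisc {m : ℕ} {β : Type*} [Fintype β] (Q : Matrix (Fin m) β ℝ)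
    (w : ℕ) : ℝ :=
  sSup { v : ℝ | ∃ S : Finset β, S.card ≤ w ∧ v = colDisc Q S }

/-- `Q*`: the matrix `Q` with an all-ones row appended. -/
noncomputable def starMatrix {m : ℕ} {β : Type*} [Fintype β] (Q : Matrix (Fin m) β ℝ) :
    Matrix (Fin (m + 1)) β ℝ :=
  Matrix.of fun i j => if h : (i : ℕ) < m then Q ⟨i, h⟩ j else 1

/-- The modified restricted hereditary discrepancy `hdisc*(Q, w)`. -/
noncomputable def hdiscStar {m : ℕ} {β : Type*} [Fintype β] (Q : Matrix (Fin m) β ℝ)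
    (w : ℕ) : ℝ :=
  hdisc (starMatrix Q) w

/-!
Since `x` is `0/1`-valued with `‖x‖₁ = w`, it is the indicator of a set `S` of `w` columns.
Colour `S` with discrepancy at most `D := hdisc*(Q, w)` and keep the columns coloured `+1`:
every row sum of the kept columns is within `D / 2` of half the row sum over `S`. Iterating
`T` times gives `R ⊆ S` whose row sums are within `D` of the row sums of `S` divided by `2 ^ T`;
the all-ones row of `Q*` says in particular that `|R|` is within `D` of `b := w / 2 ^ T`.
Choosing `T` with `2D ≤ α b < 4D`, the averages of `Q` over `S` and over `R` differ by at most
`2D / b ≤ α`, and `|R| ≤ b + D ≤ 5D / α`.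
-/

open Finset

section Discrepancy

variable {m : ℕ} {β : Type*} [Fintype β]

lemma exists_coloring_le_colDisc (Q : Matrix (Fin m) β ℝ) (S : Finset β) :
    ∃ χ : β → ℝ, (∀ j ∈ S, χ j = 1 ∨ χ j = -1) ∧
      ∀ i, |∑ j ∈ S, Q i j * χ j| ≤ colDisc Q S := by
  classical
  unfold colDisc
  -- The infimum is attained: a colouring only matters through its signs on `S`.
  set F : (β → Bool) → ℝ := fun b =>
    ⨆ i : Fin m, |∑ j ∈ S, Q i j * if b j then (1 : ℝ) else -1|
  have hsub : {v : ℝ | ∃ χ : β → ℝ, (∀ j ∈ S, χ j = 1 ∨ χ j = -1) ∧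
      v = ⨆ i, |∑ j ∈ S, Q i j * χ j|} ⊆ Set.range F := by
    rintro v ⟨χ, hχ, rfl⟩
    refine ⟨fun j => decide (χ j = 1), ?_⟩
    refine iSup_congr fun i => congrArg abs (sum_congr rfl fun j hj => ?_)
    rcases hχ j hj with h | h <;> norm_num [h]
  have hne : {v : ℝ | ∃ χ : β → ℝ, (∀ j ∈ S, χ j = 1 ∨ χ j = -1) ∧
      v = ⨆ i, |∑ j ∈ S, Q i j * χ j|}.Nonempty := ⟨_, fun _ => 1, fun _ _ => Or.inl rfl, rfl⟩
  obtain ⟨χ, hχ, hv⟩ := hne.csInf_mem ((Set.finite_range F).subset hsub)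
  exact ⟨χ, hχ, fun i => hv ▸ le_ciSup (f := fun i => |∑ j ∈ S, Q i j * χ j|)
    (Set.finite_range _).bddAbove i⟩

lemma colDisc_nonneg (Q : Matrix (Fin m) β ℝ) (S : Finset β) : 0 ≤ colDisc Q S :=
  le_csInf ⟨_, fun _ => 1, fun _ _ => Or.inl rfl, rfl⟩ <| by
    rintro _ ⟨χ, -, rfl⟩
    exact Real.iSup_nonneg fun i => abs_nonneg _

lemma colDisc_le_hdisc (Q : Matrix (Fin m) β ℝ) {S : Finset β} {w : ℕ} (hS : #S ≤ w) :
    colDisc Q S ≤ hdisc Q w := by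
  refine le_csSup ((Set.finite_range (colDisc Q)).subset ?_).bddAbove ⟨S, hS, rfl⟩
  rintro _ ⟨S', -, rfl⟩
  exact ⟨S', rfl⟩

lemma hdisc_nonneg (Q : Matrix (Fin m) β ℝ) (w : ℕ) : 0 ≤ hdisc Q w :=
  (colDisc_nonneg Q ∅).trans (colDisc_le_hdisc Q (by simp))

lemma exists_subset_abs_sum_sub_half_le (Q : Matrix (Fin m) β ℝ) (S : Finset β) :
    ∃ S' ⊆ S, ∀ i, |∑ j ∈ S', Q i j - (∑ j ∈ S, Q i j) / 2| ≤ colDisc Q S / 2 := by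
  classical
  obtain ⟨χ, hχ, hle⟩ := exists_coloring_le_colDisc Q S
  refine ⟨S.filter (χ · = 1), filter_subset _ _, fun i => ?_⟩
  have hsplit := sum_filter_add_sum_filter_not S (χ · = 1) (Q i)
  have hsigned : ∑ j ∈ S, Q i j * χ j =
      ∑ j ∈ S.filter (χ · = 1), Q i j - ∑ j ∈ S.filter (¬χ · = 1), Q i j := by
    rw [← sum_filter_add_sum_filter_not S (χ · = 1), sub_eq_add_neg, ← sum_neg_distrib]
    congr 1 <;> refine sum_congr rfl fun j hj => ?_ <;> obtain ⟨hjS, hj⟩ := mem_filter.1 hj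
    · simp [hj]
    · simp [(hχ j hjS).resolve_left hj]
  have hhalf : ∑ j ∈ S.filter (χ · = 1), Q i j - (∑ j ∈ S, Q i j) / 2 =
      (∑ j ∈ S, Q i j * χ j) / 2 := by
    linarith
  rw [hhalf, abs_div, abs_two]
  linarith [hle i]

lemma exists_subset_abs_sum_sub_div_two_pow_le (Q : Matrix (Fin m) β ℝ) {S : Finset β}
    {w : ℕ} (hS : #S ≤ w) (t : ℕ) :
    ∃ R ⊆ S, ∀ i, |∑ j ∈ R, Q i j - (∑ j ∈ S, Q i j) / 2 ^ t| ≤ hdisc Q w := by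
  induction t with
  | zero => exact ⟨S, Subset.rfl, fun i => by simpa using hdisc_nonneg Q w⟩
  | succ t ih =>
    obtain ⟨R, hRS, hR⟩ := ih
    obtain ⟨R', hR'R, hR'⟩ := exists_subset_abs_sum_sub_half_le Q R
    refine ⟨R', hR'R.trans hRS, fun i => ?_⟩
    have hdiscR : colDisc Q R ≤ hdisc Q w := colDisc_le_hdisc Q ((card_le_card hRS).trans hS)
    have h₁ := abs_le.1 (hR i)
    have h₂ := abs_le.1 (hR' i)
    rw [pow_succ, ← div_div, abs_le]
    constructor <;> linarith

@[simp]
lemma starMatrix_castSucc (Q : Matrix (Fin m) β ℝ) (i : Fin m) (j : β) :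
    starMatrix Q i.castSucc j = Q i j := by
  simp [starMatrix]

@[simp]
lemma starMatrix_last (Q : Matrix (Fin m) β ℝ) (j : β) : starMatrix Q (Fin.last m) j = 1 := by
  simp [starMatrix]

lemma one_le_hdiscStar (Q : Matrix (Fin m) β ℝ) (j : β) {w : ℕ} (hw : 1 ≤ w) :
    1 ≤ hdiscStar Q w := by
  obtain ⟨χ, hχ, hle⟩ := exists_coloring_le_colDisc (starMatrix Q) {j}
  calc (1 : ℝ) = |∑ k ∈ {j}, starMatrix Q (Fin.last m) k * χ k| := by
        rcases hχ j (mem_singleton_self j) with h | h <;> simp [h]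
    _ ≤ colDisc (starMatrix Q) {j} := hle _
    _ ≤ hdiscStar Q w := colDisc_le_hdisc _ (by simpa using hw)

end Discrepancy

lemma exists_eq_indicator_of_sum_abs_eq {β : Type*} [Fintype β] [DecidableEq β] {x : β → ℝ}
    (hx : ∀ j, x j ∈ Set.Icc (0 : ℝ) 1) {S : Finset β} {w : ℕ} (hS : #S ≤ w)
    (hsupp : ∀ j ∉ S, x j = 0) (hsum : ∑ j, |x j| = w) :
    #S = w ∧ ∀ j, x j = if j ∈ S then 1 else 0 := by
  have hxS : ∑ j ∈ S, x j = w := by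
    rw [sum_subset (subset_univ S) fun j _ hj => hsupp j hj, ← hsum]
    exact sum_congr rfl fun j _ => (abs_of_nonneg (hx j).1).symm
  have hnn : ∀ j ∈ S, 0 ≤ 1 - x j := fun j _ => sub_nonneg.2 (hx j).2
  have hgap : ∑ j ∈ S, (1 - x j) = #S - w := by simp [sum_sub_distrib, hxS]
  have hSw : (#S : ℝ) ≤ w := by exact_mod_cast hS
  have hzero : ∑ j ∈ S, (1 - x j) = 0 := le_antisymm (by linarith) (sum_nonneg hnn)
  refine ⟨by exact_mod_cast (by linarith : (#S : ℝ) = w), fun j => ?_⟩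
  split_ifs with hj
  · linarith [(sum_eq_zero_iff_of_nonneg hnn).1 hzero j hj]
  · exact hsupp j hj

lemma sum_mul_ite_mem_div {β : Type*} [Fintype β] [DecidableEq β] (f : β → ℝ) (S : Finset β)
    (c : ℝ) : ∑ j, f j * ((if j ∈ S then 1 else 0) / c) = (∑ j ∈ S, f j) / c := by
  simp [div_eq_mul_inv, sum_mul]

lemma exists_le_div_two_pow_lt {c u : ℝ} (hc : 0 < c) (hcu : c ≤ u) :
    ∃ n : ℕ, c ≤ u / 2 ^ n ∧ u / 2 ^ n < 2 * c := by
  obtain ⟨n, h₁, h₂⟩ := exists_nat_pow_near ((one_le_div hc).2 hcu) one_lt_two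
  refine ⟨n, ?_, ?_⟩
  · rwa [le_div_iff₀ hc, ← le_div_iff₀' (by positivity)] at h₁
  · rw [div_lt_iff₀ hc, pow_succ] at h₂
    rw [div_lt_iff₀ (by positivity)]
    linarith

lemma abs_div_sub_div_le {a a₀ b s D α : ℝ} (ha : 0 ≤ a) (has : a ≤ s) (hs : 0 < s)
    (hb : 0 < b) (hsb : |s - b| ≤ D) (haa₀ : |a - a₀| ≤ D) (hD : 2 * D ≤ α * b) :
    |a₀ / b - a / s| ≤ α := by
  have hD₀ : 0 ≤ D := (abs_nonneg _).trans hsb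
  have hnum : |a₀ * s - b * a| ≤ D * s + a * D :=
    calc |a₀ * s - b * a| = |(a₀ - a) * s + a * (s - b)| := by ring_nf
      _ ≤ |a₀ - a| * s + a * |s - b| := by
        simpa [abs_mul, abs_of_pos hs, abs_of_nonneg ha] using
          abs_add_le ((a₀ - a) * s) (a * (s - b))
      _ ≤ D * s + a * D := by rw [abs_sub_comm] at haa₀; gcongr
  rw [div_sub_div _ _ hb.ne' hs.ne', abs_div, abs_of_pos (mul_pos hb hs),
    div_le_iff₀ (mul_pos hb hs)]
  nlinarith [mul_le_mul_of_nonneg_left has hD₀, mul_le_mul_of_nonneg_right hD hs.le]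

theorem stmt15_general {m N : ℕ} (α : ℝ) (hα : α ∈ Set.Ioo (0 : ℝ) 1)
    (Q : Matrix (Fin m) (Fin N) ℝ) (hQ : ∀ i j, Q i j ∈ Set.Icc (0 : ℝ) 1)
    (w : ℕ) (hw1 : 1 ≤ w)
    (x : Fin N → ℝ) (hx : ∀ j, x j ∈ Set.Icc (0 : ℝ) 1)
    (hx0 : ∃ S : Finset (Fin N), S.card ≤ w ∧ ∀ j ∉ S, x j = 0)
    (hx1 : ∑ j, |x j| = w)
    (hH : hdiscStar Q w ≤ α * w / 4) :
    ∃ y : Fin N → ℝ, (∀ j, y j = 0 ∨ y j = 1) ∧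
      1 ≤ ∑ j, y j ∧ (∑ j, y j) ≤ 5 * hdiscStar Q w / α ∧
      ∀ i, |(∑ j, Q i j * (x j / w)) - ∑ j, Q i j * (y j / (∑ j', y j'))| ≤ α := by
  obtain ⟨hα₀, hα₁⟩ := hα
  obtain ⟨S, hSw, hsupp⟩ := hx0
  obtain ⟨hSw, hxS⟩ := exists_eq_indicator_of_sum_abs_eq hx hSw hsupp hx1
  obtain rfl : x = fun j => if j ∈ S then 1 else 0 := funext hxS
  set D := hdiscStar Q w
  have hD_def : hdisc (starMatrix Q) w = D := rfl
  obtain ⟨j₀, -⟩ : S.Nonempty := card_pos.1 (hSw ▸ hw1)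
  have hD : 1 ≤ D := one_le_hdiscStar Q j₀ hw1
  obtain ⟨T, hT₁, hT₂⟩ := exists_le_div_two_pow_lt (c := 2 * D) (u := α * w) (by positivity)
    (by linarith)
  obtain ⟨R, -, hR⟩ := exists_subset_abs_sum_sub_div_two_pow_le (starMatrix Q) hSw.le T
  rw [mul_div_assoc] at hT₁ hT₂
  have hs : |(#R : ℝ) - w / 2 ^ T| ≤ D := by simpa [hSw, hD_def] using hR (Fin.last m)
  have hb : (0 : ℝ) < w / 2 ^ T := by positivity
  have hR₁ : 1 ≤ (#R : ℝ) := by nlinarith [abs_le.1 hs]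
  have hy : ∑ j, (if j ∈ R then 1 else 0 : ℝ) = #R := by simp
  refine ⟨fun j => if j ∈ R then 1 else 0, fun j => by by_cases j ∈ R <;> simp [*], ?_, ?_,
    fun i => ?_⟩
  · rwa [hy]
  · rw [hy, le_div_iff₀ hα₀]
    nlinarith [abs_le.1 hs]
  · rw [hy, sum_mul_ite_mem_div, sum_mul_ite_mem_div,
      ← div_div_div_cancel_right₀ (pow_ne_zero T two_ne_zero)]
    refine abs_div_sub_div_le (sum_nonneg fun j _ => (hQ i j).1) ?_ (by linarith) hb hs
      (by simpa [hD_def] using hR i.castSucc) hT₁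
    simpa using sum_le_sum fun j (_ : j ∈ R) => (hQ i j).2

theorem stmt15 {m N : ℕ} (α : ℝ) (hα : α ∈ Set.Ioo (0 : ℝ) 1)
    (Q : Matrix (Fin m) (Fin N) ℝ) (hQ : ∀ i j, Q i j ∈ Set.Icc (0 : ℝ) 1)
    (w : ℕ) (hw1 : 1 ≤ w) (hwN : w ≤ N)
    (x : Fin N → ℝ) (hx : ∀ j, x j ∈ Set.Icc (0 : ℝ) 1)
    (hx0 : ∃ S : Finset (Fin N), S.card ≤ w ∧ ∀ j ∉ S, x j = 0)
    (hx1 : ∑ j, |x j| = w)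
    (hH : hdiscStar Q w ≤ α * w / 4) :
    ∃ y : Fin N → ℝ, (∀ j, y j = 0 ∨ y j = 1) ∧
      1 ≤ ∑ j, y j ∧ (∑ j, y j) ≤ 5 * hdiscStar Q w / α ∧
      ∀ i, |(∑ j, Q i j * (x j / w)) - ∑ j, Q i j * (y j / (∑ j', y j'))| ≤ α :=
  stmt15_general α hα Q hQ w hw1 x hx hx0 hx1 hH
end
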